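/- arXiv:2011.04709 — 2 statements merged into one kernel-verified Lean document; each statement's English description precedes it below -/
import Mathlib

section
/- Let X be a finite nonempty set, p : X → ℝ a strictly positive base measure, α > 0, and for θ ∈ ℝ let r_θ : X → ℝ be such that θ ↦ r_θ(x) is differentiable for each x. Define the tilted distribution ρ_θ(x) = p(x)·exp(r_θ(x)/α) / Z(θ) with Z(θ) = Σ_{x'} p(x')·exp(r_{θ}(x')/α). Then for any fixed function g : X → ℝ, d/dθ Σ_x ρ_θ(x)·g(x) = (1/α)·Cov_{ρ_θ}(g, ∂r_θ/∂θ), where Cov_{ρ_θ}(g, h) = E_{ρ_θ}[g·h] - E_{ρ_θ}[g]·E_{ρ_θ}[h]. -/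
/-!
`ρ_θ` is the normalization of the weights `w_θ(x) = p(x) exp(r_θ(x)/α)`, whose logarithmic
derivative in `θ` is `r'_θ/α`. By the quotient rule, the derivative of a normalized average
`∑ w_θ g / ∑ w_θ` is, for any weights, the covariance of `g` with the logarithmic derivative of
the weights under the normalized distribution.
-/

open Finset

theorem hasDerivAt_centerMass {ι : Type*} {t : Finset ι} {w : ℝ → ι → ℝ} {s : ι → ℝ}
    {θ₀ : ℝ} (hw : ∀ i ∈ t, HasDerivAt (fun θ => w θ i) (w θ₀ i * s i) θ₀)
    (hZ : ∑ i ∈ t, w θ₀ i ≠ 0) (g : ι → ℝ) :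
    HasDerivAt (fun θ => t.centerMass (w θ) g)
      (t.centerMass (w θ₀) (g * s) - t.centerMass (w θ₀) g * t.centerMass (w θ₀) s) θ₀ := by
  have hN : HasDerivAt (fun θ => ∑ i ∈ t, w θ i * g i) (∑ i ∈ t, w θ₀ i * s i * g i) θ₀ :=
    .fun_sum fun i hi => (hw i hi).mul_const (g i)
  have hD : HasDerivAt (fun θ => ∑ i ∈ t, w θ i) (∑ i ∈ t, w θ₀ i * s i) θ₀ :=
    .fun_sum hw
  have hgs : ∑ i ∈ t, w θ₀ i * (g i * s i) = ∑ i ∈ t, w θ₀ i * s i * g i :=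
    sum_congr rfl fun i _ => by ring
  simp only [centerMass, smul_eq_mul, Pi.mul_apply, hgs, inv_mul_eq_div]
  refine (hN.div hD hZ).congr_deriv ?_
  field_simp

theorem deriv_expectation_tilted_general
    {X : Type*} [Fintype X] [Nonempty X]
    (p : X → ℝ) (hp : ∀ x, 0 < p x) (α : ℝ)
    (r r' : ℝ → X → ℝ)
    (hr : ∀ x θ, HasDerivAt (fun θ => r θ x) (r' θ x) θ)
    (Z : ℝ → ℝ) (hZ : ∀ θ, Z θ = ∑ x, p x * Real.exp (r θ x / α))
    (ρ : ℝ → X → ℝ) (hρ : ∀ θ x, ρ θ x = p x * Real.exp (r θ x / α) / Z θ)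
    (g : X → ℝ) (θ₀ : ℝ) :
    HasDerivAt (fun θ => ∑ x, ρ θ x * g x)
      ((1 / α) * ((∑ x, ρ θ₀ x * (g x * r' θ₀ x))
        - (∑ x, ρ θ₀ x * g x) * (∑ x, ρ θ₀ x * r' θ₀ x))) θ₀ := by
  set w : ℝ → X → ℝ := fun θ x => p x * Real.exp (r θ x / α)
  have hρ_sum (θ : ℝ) (f : X → ℝ) : ∑ x, ρ θ x * f x = univ.centerMass (w θ) f := by
    simp only [centerMass, smul_eq_mul, mul_sum, hρ, hZ]
    exact sum_congr rfl fun x _ => by ring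
  have hw : ∀ x ∈ univ, HasDerivAt (fun θ => w θ x) (w θ₀ x * (r' θ₀ x / α)) θ₀ :=
    fun x _ => by simpa [w, mul_assoc] using ((hr x θ₀).div_const α).exp.const_mul (p x)
  have hw₀ : ∑ x, w θ₀ x ≠ 0 :=
    (sum_pos (fun x _ => mul_pos (hp x) (Real.exp_pos _)) univ_nonempty).ne'
  simp only [hρ_sum]
  convert hasDerivAt_centerMass hw hw₀ g using 1
  simp only [centerMass, smul_eq_mul, Pi.mul_apply]
  field_simp
  simp only [← sum_div]
  ring

open Finset in
/-- Covariance identity for exponentially tilted distributions (finite-state version of the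
f-IRL gradient theorem): with `ρ_θ(x) = p(x) exp(r_θ(x)/α) / Z(θ)`, for any fixed `g`,
`d/dθ E_{ρ_θ}[g] = (1/α)·Cov_{ρ_θ}(g, ∂r_θ/∂θ)`. -/
theorem deriv_expectation_tilted
    {X : Type*} [Fintype X] [Nonempty X]
    (p : X → ℝ) (hp : ∀ x, 0 < p x) (α : ℝ) (hα : 0 < α)
    (r r' : ℝ → X → ℝ)
    (hr : ∀ x θ, HasDerivAt (fun θ => r θ x) (r' θ x) θ)
    (Z : ℝ → ℝ) (hZ : ∀ θ, Z θ = ∑ x, p x * Real.exp (r θ x / α))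
    (ρ : ℝ → X → ℝ) (hρ : ∀ θ x, ρ θ x = p x * Real.exp (r θ x / α) / Z θ)
    (g : X → ℝ) (θ₀ : ℝ) :
    HasDerivAt (fun θ => ∑ x, ρ θ x * g x)
      ((1 / α) * ((∑ x, ρ θ₀ x * (g x * r' θ₀ x))
        - (∑ x, ρ θ₀ x * g x) * (∑ x, ρ θ₀ x * r' θ₀ x))) θ₀ :=
  deriv_expectation_tilted_general p hp α r r' hr Z hZ ρ hρ g θ₀
end

section
/- Let S and A be finite sets, γ ∈ [0,1), r : S × A × S → ℝ a reward function, and Φ : S → ℝ any function. Define the shaped reward r̂(s,a,s') = r(s,a,s') + γ·Φ(s') - Φ(s). For any policy π and any transition kernel P, the discounted action-value functions satisfy Q̂^π(s,a) = Q^π(s,a) - Φ(s) for all (s,a), where Q^π and Q̂^π are the Q-functions under r and r̂ respectively. Consequently, for every state s, argmax_a Q̂^π(s,a) = argmax_a Q^π(s,a). -/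
/-!
The difference `Q - Φ` satisfies the Bellman equation of the shaped reward: the term `γ Φ(s')`
added to the reward cancels against the continuation value `γ E_π[Q(s', ·) - Φ(s')]`, and the
term `-Φ(s)` comes out of the average over `s'`. The policy-evaluation operator is a
`γ`-contraction for the sup distance, so its fixed point is unique and `Q̂ = Q - Φ`. Shifting
`Q(s, ·)` by the constant `Φ(s)` leaves its maximizers unchanged.
-/

open Finset Function

theorem abs_sum_mul_le_of_stochastic {ι : Type*} [Fintype ι] {w f : ι → ℝ} {C : ℝ}
    (hw0 : ∀ i, 0 ≤ w i) (hw1 : ∑ i, w i = 1) (hf : ∀ i, |f i| ≤ C) :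
    |∑ i, w i * f i| ≤ C :=
  calc |∑ i, w i * f i| ≤ ∑ i, |w i * f i| := abs_sum_le_sum_abs _ _
    _ ≤ ∑ i, w i * C := by
        gcongr with i
        rw [abs_mul, abs_of_nonneg (hw0 i)]
        exact mul_le_mul_of_nonneg_left (hf i) (hw0 i)
    _ = C := by rw [← sum_mul, hw1, one_mul]

section PolicyEvaluation

variable {S A : Type*} [Fintype S] [Fintype A]

def bellmanQ (γ : ℝ) (P : S → A → S → ℝ) (π : S → A → ℝ) (R : S → A → S → ℝ)
    (Q : S → A → ℝ) : S → A → ℝ :=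
  fun s a => ∑ s', P s a s' * (R s a s' + γ * ∑ a', π s' a' * Q s' a')

def shapedReward (γ : ℝ) (r : S → A → S → ℝ) (Φ : S → ℝ) : S → A → S → ℝ :=
  fun s a s' => r s a s' + γ * Φ s' - Φ s

variable {γ : ℝ} {P : S → A → S → ℝ} {π : S → A → ℝ}

theorem bellmanQ_sub_bellmanQ (R : S → A → S → ℝ) (Q₁ Q₂ : S → A → ℝ) (s : S) (a : A) :
    bellmanQ γ P π R Q₁ s a - bellmanQ γ P π R Q₂ s a =
      γ * ∑ s', P s a s' * ∑ a', π s' a' * (Q₁ s' a' - Q₂ s' a') := by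
  rw [bellmanQ, bellmanQ, ← sum_sub_distrib, mul_sum]
  refine sum_congr rfl fun s' _ => ?_
  simp only [mul_sub, sum_sub_distrib]
  ring

theorem dist_bellmanQ_le (hγ0 : 0 ≤ γ) (hP0 : ∀ s a s', 0 ≤ P s a s')
    (hP1 : ∀ s a, ∑ s', P s a s' = 1) (hπ0 : ∀ s a, 0 ≤ π s a) (hπ1 : ∀ s, ∑ a, π s a = 1)
    (R : S → A → S → ℝ) (Q₁ Q₂ : S → A → ℝ) :
    dist (bellmanQ γ P π R Q₁) (bellmanQ γ P π R Q₂) ≤ γ * dist Q₁ Q₂ := by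
  have hQ : ∀ s a, |Q₁ s a - Q₂ s a| ≤ dist Q₁ Q₂ := fun s a =>
    (dist_le_pi_dist _ _ a).trans (dist_le_pi_dist Q₁ Q₂ s)
  have hnonneg : 0 ≤ γ * dist Q₁ Q₂ := mul_nonneg hγ0 dist_nonneg
  refine (dist_pi_le_iff hnonneg).2 fun s => (dist_pi_le_iff hnonneg).2 fun a => ?_
  rw [Real.dist_eq, bellmanQ_sub_bellmanQ, abs_mul, abs_of_nonneg hγ0]
  gcongr
  exact abs_sum_mul_le_of_stochastic (hP0 s a) (hP1 s a) fun s' =>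
    abs_sum_mul_le_of_stochastic (hπ0 s') (hπ1 s') (hQ s')

theorem contractingWith_bellmanQ (hγ0 : 0 ≤ γ) (hγ1 : γ < 1) (hP0 : ∀ s a s', 0 ≤ P s a s')
    (hP1 : ∀ s a, ∑ s', P s a s' = 1) (hπ0 : ∀ s a, 0 ≤ π s a) (hπ1 : ∀ s, ∑ a, π s a = 1)
    (R : S → A → S → ℝ) :
    ContractingWith ⟨γ, hγ0⟩ (bellmanQ γ P π R) :=
  ⟨hγ1, LipschitzWith.of_dist_le_mul fun Q₁ Q₂ => dist_bellmanQ_le hγ0 hP0 hP1 hπ0 hπ1 R Q₁ Q₂⟩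

theorem bellmanQ_shapedReward (hP1 : ∀ s a, ∑ s', P s a s' = 1) (hπ1 : ∀ s, ∑ a, π s a = 1)
    (r : S → A → S → ℝ) (Φ : S → ℝ) (Q : S → A → ℝ) :
    bellmanQ γ P π (shapedReward γ r Φ) (fun s a => Q s a - Φ s) =
      fun s a => bellmanQ γ P π r Q s a - Φ s := by
  funext s a
  have hcont : ∀ s', ∑ a', π s' a' * (Q s' a' - Φ s') = ∑ a', π s' a' * Q s' a' - Φ s' := by
    intro s'
    simp only [mul_sub, sum_sub_distrib, ← sum_mul, hπ1, one_mul]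
  calc bellmanQ γ P π (shapedReward γ r Φ) (fun s a => Q s a - Φ s) s a
      = ∑ s', (P s a s' * (r s a s' + γ * ∑ a', π s' a' * Q s' a') - P s a s' * Φ s) := by
        refine sum_congr rfl fun s' _ => ?_
        rw [shapedReward, hcont]
        ring
    _ = bellmanQ γ P π r Q s a - Φ s := by rw [sum_sub_distrib, ← sum_mul, hP1, one_mul]; rfl

end PolicyEvaluation

open Finset in
theorem potential_shaping_general
    {S A : Type*} [Fintype S] [Fintype A]
    (γ : ℝ) (hγ0 : 0 ≤ γ) (hγ1 : γ < 1)
    (r : S → A → S → ℝ) (Φ : S → ℝ)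
    (P : S → A → S → ℝ) (hP0 : ∀ s a s', 0 ≤ P s a s') (hP1 : ∀ s a, ∑ s', P s a s' = 1)
    (π : S → A → ℝ) (hπ0 : ∀ s a, 0 ≤ π s a) (hπ1 : ∀ s, ∑ a, π s a = 1)
    (Q Qhat : S → A → ℝ)
    (hQ : ∀ s a, Q s a = ∑ s', P s a s' * (r s a s' + γ * ∑ a', π s' a' * Q s' a'))
    (hQhat : ∀ s a, Qhat s a = ∑ s', P s a s' *
      ((r s a s' + γ * Φ s' - Φ s) + γ * ∑ a', π s' a' * Qhat s' a')) :
    (∀ s a, Qhat s a = Q s a - Φ s) ∧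
    (∀ s : S, {a : A | ∀ a', Qhat s a' ≤ Qhat s a} = {a : A | ∀ a', Q s a' ≤ Q s a}) := by
  have hQfix : IsFixedPt (bellmanQ γ P π r) Q := funext₂ fun s a => (hQ s a).symm
  have hQhatfix : IsFixedPt (bellmanQ γ P π (shapedReward γ r Φ)) Qhat :=
    funext₂ fun s a => (hQhat s a).symm
  have hshiftfix : IsFixedPt (bellmanQ γ P π (shapedReward γ r Φ)) fun s a => Q s a - Φ s := by
    rw [IsFixedPt, bellmanQ_shapedReward hP1 hπ1, hQfix.eq]
  have hshift : ∀ s a, Qhat s a = Q s a - Φ s := congr_fun₂ <|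
    (contractingWith_bellmanQ hγ0 hγ1 hP0 hP1 hπ0 hπ1 _).fixedPoint_unique' hQhatfix hshiftfix
  exact ⟨hshift, fun s => by simp only [hshift, sub_le_sub_iff_right]⟩

open Finset in
/-- Potential-based reward shaping: if `Q` and `Qhat` are the discounted action-value
functions of a policy `π` under rewards `r` and `r̂(s,a,s') = r(s,a,s') + γΦ(s') - Φ(s)`
respectively (characterized by their Bellman equations under transition kernel `P`),
then `Qhat(s,a) = Q(s,a) - Φ(s)`, and greedy action selection is unchanged. -/
theorem potential_shaping
    {S A : Type*} [Fintype S] [Fintype A] [Nonempty S] [Nonempty A]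
    (γ : ℝ) (hγ0 : 0 ≤ γ) (hγ1 : γ < 1)
    (r : S → A → S → ℝ) (Φ : S → ℝ)
    (P : S → A → S → ℝ) (hP0 : ∀ s a s', 0 ≤ P s a s') (hP1 : ∀ s a, ∑ s', P s a s' = 1)
    (π : S → A → ℝ) (hπ0 : ∀ s a, 0 ≤ π s a) (hπ1 : ∀ s, ∑ a, π s a = 1)
    (Q Qhat : S → A → ℝ)
    (hQ : ∀ s a, Q s a = ∑ s', P s a s' * (r s a s' + γ * ∑ a', π s' a' * Q s' a'))
    (hQhat : ∀ s a, Qhat s a = ∑ s', P s a s' *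
      ((r s a s' + γ * Φ s' - Φ s) + γ * ∑ a', π s' a' * Qhat s' a')) :
    (∀ s a, Qhat s a = Q s a - Φ s) ∧
    (∀ s : S, {a : A | ∀ a', Qhat s a' ≤ Qhat s a} = {a : A | ∀ a', Q s a' ≤ Q s a}) :=
  potential_shaping_general γ hγ0 hγ1 r Φ P hP0 hP1 π hπ0 hπ1 Q Qhat hQ hQhat
end
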